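/- arXiv:1410.1031 — 2 statements merged into one kernel-verified Lean document; each statement's English description precedes it below -/
import Mathlib

section
/- Let {a_1, …, a_K} be a (K, L, Z) ZCZ set with Z ≥ 2 such that every entry of every a_i has modulus 1, let b_i be a length-N complex sequence, and set c_i = a_i ⊗ b_i (length NL). Then for every shift τ with 0 ≤ τ ≤ N−1, the periodic autocorrelation of c_i satisfies R_{c_i}(τ) = L · C_{b_i}(τ), where C_{b_i} is the aperiodic autocorrelation of b_i. -/
open Finset

/-- Periodic cross-correlation of two length-`M` complex sequences,
indices taken modulo `M`, defined for all integer shifts `τ`. -/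
noncomputable def pcc (M : ℕ) (a b : ℕ → ℂ) (τ : ℤ) : ℂ :=
  ∑ n ∈ Finset.range M, a n * (starRingEnd ℂ) (b ((((n : ℤ) + τ) % (M : ℤ)).toNat))

/-- Aperiodic cross-correlation of two length-`M` complex sequences at integer shift `τ`. -/
noncomputable def acc (M : ℕ) (a b : ℕ → ℂ) (τ : ℤ) : ℂ :=
  if 0 ≤ τ then
    ∑ n ∈ Finset.range (M - τ.toNat), a n * (starRingEnd ℂ) (b (n + τ.toNat))
  else
    ∑ n ∈ Finset.range (M - (-τ).toNat), a (n + (-τ).toNat) * (starRingEnd ℂ) (b n)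

/-- Kronecker product of a length-`L` sequence `d` with a length-`N` sequence `x`:
`(d ⊗ x) (l*N + n) = d l * x n`. -/
def kron (N : ℕ) (d x : ℕ → ℂ) : ℕ → ℂ :=
  fun k => d (k / N) * x (k % N)

/-- `{a_1, …, a_K}` is a `(K, L, Z)` ZCZ sequence set: zero periodic autocorrelation
for `1 ≤ |τ| < Z` and zero periodic cross-correlation for `0 ≤ |τ| < Z`, `i ≠ j`. -/
def IsZCZ (K L Z : ℕ) (a : Fin K → ℕ → ℂ) : Prop :=
  (∀ i : Fin K, ∀ τ : ℤ, 1 ≤ τ.natAbs → τ.natAbs < Z → pcc L (a i) (a i) τ = 0) ∧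
  (∀ i j : Fin K, i ≠ j → ∀ τ : ℤ, τ.natAbs < Z → pcc L (a i) (a j) τ = 0)

/-!
Write `c = a ⊗ b` in blocks of length `N`. For a shift `0 ≤ τ < N` the entry `n` of block `l`
is paired either with entry `n + τ` of the same block, or, when `n + τ ≥ N`, with entry
`n + τ - N` of block `l + 1 (mod L)`. Hence `R_{a⊗b, a'⊗b'}(τ)` is
`R_{a,a'}(0) C_{b,b'}(τ) + R_{a,a'}(1) C_{b,b'}(τ - N)`. For `c_i = a_i ⊗ b_i` unimodularity gives
`R_{a_i}(0) = L`, and the zero correlation zone (`Z ≥ 2`) gives `R_{a_i}(1) = 0`.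
-/

open ComplexConjugate

lemma sum_range_mul_eq_sum_sum {M : Type*} [AddCommMonoid M] (N L : ℕ) (f : ℕ → M) :
    ∑ k ∈ range (N * L), f k = ∑ l ∈ range L, ∑ n ∈ range N, f (N * l + n) := by
  induction L with
  | zero => simp
  | succ L ih => rw [Nat.mul_succ, sum_range_add, ih, sum_range_succ]

lemma pcc_natCast (M : ℕ) (a b : ℕ → ℂ) (τ : ℕ) :
    pcc M a b τ = ∑ n ∈ range M, a n * conj (b ((n + τ) % M)) := by
  simp only [pcc, ← Nat.cast_add, ← Int.natCast_mod, Int.toNat_natCast]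

lemma acc_natCast (M : ℕ) (a b : ℕ → ℂ) (τ : ℕ) :
    acc M a b τ = ∑ n ∈ range (M - τ), a n * conj (b (n + τ)) := by
  simp only [acc, Nat.cast_nonneg, if_true, Int.toNat_natCast]

lemma acc_natCast_sub {M τ : ℕ} (hτ : τ < M) (a b : ℕ → ℂ) :
    acc M a b ((τ : ℤ) - M) = ∑ j ∈ range τ, a (M - τ + j) * conj (b j) := by
  have hneg : ¬ (0 : ℤ) ≤ (τ : ℤ) - M := by omega
  have hshift : (-((τ : ℤ) - M)).toNat = M - τ := by omega
  rw [acc, if_neg hneg, hshift, Nat.sub_sub_self hτ.le]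
  simp only [add_comm]

lemma kron_mul_add {N l n : ℕ} (hn : n < N) (d x : ℕ → ℂ) :
    kron N d x (N * l + n) = d l * x n := by
  rw [kron, Nat.mul_add_div (by omega), Nat.div_eq_of_lt hn, add_zero, Nat.mul_add_mod,
    Nat.mod_eq_of_lt hn]

lemma kron_mod_mul (N L : ℕ) (d x : ℕ → ℂ) (k : ℕ) :
    kron N d x (k % (N * L)) = d (k / N % L) * x (k % N) := by
  rw [kron, Nat.mod_mul_right_div_self, Nat.mod_mul_right_mod]

lemma sum_block_kron_mul_conj {N τ : ℕ} (hτ : τ < N) (L l : ℕ) (d e x y : ℕ → ℂ) :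
    ∑ n ∈ range N, kron N d x (N * l + n) * conj (kron N e y ((N * l + n + τ) % (N * L))) =
      d l * conj (e (l % L)) * ∑ n ∈ range (N - τ), x n * conj (y (n + τ)) +
        d l * conj (e ((l + 1) % L)) * ∑ j ∈ range τ, x (N - τ + j) * conj (y j) := by
  have hN : 0 < N := by omega
  have hblock : ∀ n < N, kron N d x (N * l + n) * conj (kron N e y ((N * l + n + τ) % (N * L))) =
      d l * conj (e ((l + (n + τ) / N) % L)) * (x n * conj (y ((n + τ) % N))) := by
    intro n hn
    rw [kron_mul_add hn, kron_mod_mul, add_assoc, Nat.mul_add_div hN, Nat.mul_add_mod, map_mul]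
    ring
  rw [sum_congr rfl fun n hn => hblock n (mem_range.mp hn), ← Nat.sub_add_cancel hτ.le,
    sum_range_add, Nat.sub_add_cancel hτ.le, mul_sum, mul_sum]
  congr 1
  · refine sum_congr rfl fun n hn => ?_
    have hn : n + τ < N := by have := mem_range.mp hn; omega
    rw [Nat.div_eq_of_lt hn, Nat.mod_eq_of_lt hn, add_zero]
  · refine sum_congr rfl fun j hj => ?_
    have hj : j < N := by have := mem_range.mp hj; omega
    have hwrap : N - τ + j + τ = N * 1 + j := by omega
    rw [hwrap, Nat.mul_add_div hN, Nat.div_eq_of_lt hj, Nat.mul_add_mod, Nat.mod_eq_of_lt hj,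
      add_zero]

theorem pcc_kron {N τ : ℕ} (hτ : τ < N) (L : ℕ) (d e x y : ℕ → ℂ) :
    pcc (N * L) (kron N d x) (kron N e y) τ =
      pcc L d e 0 * acc N x y τ + pcc L d e 1 * acc N x y ((τ : ℤ) - N) := by
  have hR0 : pcc L d e 0 = ∑ l ∈ range L, d l * conj (e (l % L)) := by
    simpa using pcc_natCast L d e 0
  have hR1 : pcc L d e 1 = ∑ l ∈ range L, d l * conj (e ((l + 1) % L)) := by
    simpa using pcc_natCast L d e 1
  rw [pcc_natCast, sum_range_mul_eq_sum_sum,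
    sum_congr rfl fun l _ => sum_block_kron_mul_conj hτ L l d e x y, sum_add_distrib,
    ← sum_mul, ← sum_mul, acc_natCast, acc_natCast_sub hτ, hR0, hR1]

lemma pcc_self_zero_of_norm_eq_one {L : ℕ} {a : ℕ → ℂ} (ha : ∀ l < L, ‖a l‖ = 1) :
    pcc L a a 0 = L := by
  rw [← Nat.cast_zero, pcc_natCast]
  calc ∑ l ∈ range L, a l * conj (a ((l + 0) % L))
      = ∑ l ∈ range L, (1 : ℂ) := sum_congr rfl fun l hl => by
        have hl := mem_range.mp hl
        rw [add_zero, Nat.mod_eq_of_lt hl, Complex.mul_conj, Complex.normSq_eq_norm_sq, ha l hl]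
        norm_num
    _ = L := by simp

theorem quasiZCZ_autocorrelation_small_shift_general
    (K L N Z : ℕ) (hN : 0 < N) (hZ : 2 ≤ Z)
    (a : Fin K → ℕ → ℂ) (hA : IsZCZ K L Z a)
    (hmod : ∀ i : Fin K, ∀ l < L, ‖a i l‖ = 1)
    (b : Fin K → ℕ → ℂ)
    (c : Fin K → ℕ → ℂ) (hc : ∀ i, c i = kron N (a i) (b i))
    (i : Fin K) (τ : ℕ) (hτ : τ ≤ N - 1) :
    pcc (N * L) (c i) (c i) (τ : ℤ) = (L : ℂ) * acc N (b i) (b i) (τ : ℤ) := by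
  have hR0 : pcc L (a i) (a i) 0 = L := pcc_self_zero_of_norm_eq_one (hmod i)
  have hR1 : pcc L (a i) (a i) 1 = 0 := hA.1 i 1 le_rfl (by omega)
  rw [hc, pcc_kron (by omega), hR0, hR1, zero_mul, add_zero]

theorem quasiZCZ_autocorrelation_small_shift
    (K L N Z : ℕ) (hL : 0 < L) (hN : 0 < N) (hZ : 2 ≤ Z)
    (a : Fin K → ℕ → ℂ) (hA : IsZCZ K L Z a)
    (hmod : ∀ i : Fin K, ∀ l < L, ‖a i l‖ = 1)
    (b : Fin K → ℕ → ℂ)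
    (c : Fin K → ℕ → ℂ) (hc : ∀ i, c i = kron N (a i) (b i))
    (i : Fin K) (τ : ℕ) (hτ : τ ≤ N - 1) :
    pcc (N * L) (c i) (c i) (τ : ℤ) = (L : ℂ) * acc N (b i) (b i) (τ : ℤ) :=
  quasiZCZ_autocorrelation_small_shift_general K L N Z hN hZ a hA hmod b c hc i τ hτ
end

section
/- Consider a K-user quasi-synchronous CDMA system where user j is assigned the length-NL sequence c_j = a_j ⊗ b_j, with {a_1, …, a_K} a (K, L, Z) ZCZ set of length-L complex sequences and b_j arbitrary length-N complex sequences. Let T be a nonnegative integer with T < N(Z−1), let h_p^{i,j} ∈ ℂ (0 ≤ p ≤ T) be channel coefficients, d_j ∈ ℂ data symbols, n_i ∈ ℂ^{NL} a noise vector, and let the received vector be r_i = Σ_{j=1}^{K} Σ_{p=0}^{T} h_p^{i,j} · d_j · T^p(c_j) + n_i. Then the despread output contains no multiuser interference: ⟨r_i, c_i⟩ = d_i · Σ_{p=0}^{T} h_p^{i,i} · ⟨T^p(c_i), c_i⟩ + ⟨n_i, c_i⟩, where ⟨x, y⟩ = Σ_n x_n · conj(y_n). -/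
open Finset

/-- Inner-product sum `⟨x, y⟩ = Σ_{n<M} x_n · conj(y_n)` of length-`M` sequences. -/
noncomputable def ip (M : ℕ) (x y : ℕ → ℂ) : ℂ :=
  ∑ n ∈ Finset.range M, x n * (starRingEnd ℂ) (y n)

/-- Left cyclic shift of a length-`M` sequence by `p` positions. -/
def cshift (M p : ℕ) (x : ℕ → ℂ) : ℕ → ℂ :=
  fun n => x ((n + p) % M)

lemma sum_range_mul' (N L : ℕ) (f : ℕ → ℂ) :
    ∑ k ∈ Finset.range (N * L), f k = ∑ l ∈ Finset.range L, ∑ n ∈ Finset.range N, f (l * N + n) := by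
  induction L with
  | zero => simp
  | succ L ih =>
      rw [Nat.mul_succ, Finset.sum_range_add, ih, Finset.sum_range_succ]
      congr 1
      apply Finset.sum_congr rfl; intro n hn; rw [mul_comm]

lemma conj_pcc_zero (L q : ℕ) (ai aj : ℕ → ℂ) (h : pcc L ai aj (q : ℤ) = 0) :
    ∑ l ∈ Finset.range L, aj ((l + q) % L) * (starRingEnd ℂ) (ai l) = 0 := by
  have h' := congrArg (starRingEnd ℂ) h
  rw [map_zero, pcc, map_sum] at h'
  rw [← h']
  apply Finset.sum_congr rfl
  intro l _
  rw [map_mul, Complex.conj_conj, ← Nat.cast_add, ← Int.natCast_mod, Int.toNat_natCast,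
    mul_comm]

lemma key_kron_shift_ip_zero (L N : ℕ) (hN : 0 < N) (ai aj bi bj : ℕ → ℂ) (p : ℕ)
    (h1 : pcc L ai aj ((p / N : ℕ) : ℤ) = 0)
    (h2 : pcc L ai aj ((p / N + 1 : ℕ) : ℤ) = 0) :
    ip (N * L) (cshift (N * L) p (kron N aj bj)) (kron N ai bi) = 0 := by
  set q := p / N with hq
  set s := p % N with hs
  have hsN : s < N := Nat.mod_lt _ hN
  have hp : N * q + s = p := Nat.div_add_mod p N
  have hA1 := conj_pcc_zero L q ai aj h1
  have hA2 := conj_pcc_zero L (q + 1) ai aj h2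
  rw [ip, sum_range_mul']
  have hterm : ∀ l ∈ Finset.range L, ∀ n ∈ Finset.range N,
      cshift (N * L) p (kron N aj bj) (l * N + n) * (starRingEnd ℂ) (kron N ai bi (l * N + n))
        = aj ((l + q + (n + s) / N) % L) * bj ((n + s) % N)
            * ((starRingEnd ℂ) (ai l) * (starRingEnd ℂ) (bi n)) := by
    intro l _ n hn
    rw [Finset.mem_range] at hn
    have hx : l * N + n + p = N * (l + q) + (n + s) := by rw [← hp]; ring
    have hd : (l * N + n + p) % (N * L) / N = (l + q + (n + s) / N) % L := by
      rw [Nat.mod_mul_right_div_self, hx, Nat.mul_add_div hN]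
    have hm : (l * N + n + p) % (N * L) % N = (n + s) % N := by
      rw [Nat.mod_mod_of_dvd _ ⟨L, rfl⟩, hx, Nat.mul_add_mod]
    have hd0 : (l * N + n) / N = l := by
      rw [mul_comm, Nat.mul_add_div hN, Nat.div_eq_of_lt hn, add_zero]
    have hm0 : (l * N + n) % N = n := by
      rw [mul_comm, Nat.mul_add_mod, Nat.mod_eq_of_lt hn]
    simp only [cshift, kron, hd, hm, hd0, hm0, map_mul]
  rw [Finset.sum_congr rfl (fun l hl => Finset.sum_congr rfl (hterm l hl)), Finset.sum_comm]
  apply Finset.sum_eq_zero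
  intro n hn
  rw [Finset.mem_range] at hn
  rcases lt_or_ge (n + s) N with hns | hns
  · have hδ : (n + s) / N = 0 := Nat.div_eq_of_lt hns
    calc ∑ l ∈ Finset.range L,
          aj ((l + q + (n + s) / N) % L) * bj ((n + s) % N)
            * ((starRingEnd ℂ) (ai l) * (starRingEnd ℂ) (bi n))
        = (∑ l ∈ Finset.range L, aj ((l + q) % L) * (starRingEnd ℂ) (ai l))
            * (bj ((n + s) % N) * (starRingEnd ℂ) (bi n)) := by
          rw [Finset.sum_mul]
          apply Finset.sum_congr rfl
          intro l _
          rw [hδ, add_zero]; ring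
      _ = 0 := by rw [hA1, zero_mul]
  · have hns2 : n + s - N < N := by omega
    have hδ : (n + s) / N = 1 := by
      have hrw : n + s = (n + s - N) + N := by omega
      rw [hrw, Nat.add_div_right _ hN, Nat.div_eq_of_lt hns2]
    calc ∑ l ∈ Finset.range L,
          aj ((l + q + (n + s) / N) % L) * bj ((n + s) % N)
            * ((starRingEnd ℂ) (ai l) * (starRingEnd ℂ) (bi n))
        = (∑ l ∈ Finset.range L, aj ((l + (q + 1)) % L) * (starRingEnd ℂ) (ai l))
            * (bj ((n + s) % N) * (starRingEnd ℂ) (bi n)) := by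
          rw [Finset.sum_mul]
          apply Finset.sum_congr rfl
          intro l _
          rw [hδ, ← add_assoc]; ring
      _ = 0 := by rw [hA2, zero_mul]

theorem crcdma_despreading_MUI_free
    (K L N Z : ℕ) (hL : 0 < L) (hN : 0 < N)
    (a : Fin K → ℕ → ℂ) (hA : IsZCZ K L Z a)
    (b : Fin K → ℕ → ℂ)
    (c : Fin K → ℕ → ℂ) (hc : ∀ j, c j = kron N (a j) (b j))
    (T : ℕ) (hT : T < N * (Z - 1))
    (h : Fin K → ℕ → ℂ)   -- `h j p` = channel coefficient `h_p^{i,j}`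
    (d : Fin K → ℂ)       -- data symbols
    (noise : ℕ → ℂ)       -- noise vector `n_i`
    (i : Fin K)
    (r : ℕ → ℂ)
    (hr : r = fun n =>
      (∑ j : Fin K, ∑ p ∈ Finset.range (T + 1), h j p * d j * cshift (N * L) p (c j) n)
        + noise n) :
    ip (N * L) r (c i) =
      d i * ∑ p ∈ Finset.range (T + 1), h i p * ip (N * L) (cshift (N * L) p (c i)) (c i)
        + ip (N * L) noise (c i) := by
  have hZ1 : 0 < Z - 1 := by
    rcases Nat.eq_zero_or_pos (Z - 1) with h0 | h0
    · rw [h0, Nat.mul_zero] at hT; omega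
    · exact h0
  have hzero : ∀ j : Fin K, j ≠ i → ∀ p ∈ Finset.range (T + 1),
      ip (N * L) (cshift (N * L) p (c j)) (c i) = 0 := by
    intro j hj p hp
    rw [Finset.mem_range] at hp
    have hpT : p < N * (Z - 1) := lt_of_le_of_lt (Nat.lt_succ_iff.mp hp) hT
    have hqlt : p / N < Z - 1 := by
      rw [Nat.div_lt_iff_lt_mul hN]
      rw [mul_comm] at hpT
      exact hpT
    have h1 : pcc L (a i) (a j) ((p / N : ℕ) : ℤ) = 0 := by
      apply hA.2 i j (Ne.symm hj)
      simp only [Int.natAbs_natCast]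
      omega
    have h2 : pcc L (a i) (a j) ((p / N + 1 : ℕ) : ℤ) = 0 := by
      apply hA.2 i j (Ne.symm hj)
      simp only [Int.natAbs_natCast]
      omega
    rw [hc j, hc i]
    exact key_kron_shift_ip_zero L N hN (a i) (a j) (b i) (b j) p h1 h2
  subst hr
  rw [ip]
  simp only [add_mul, Finset.sum_add_distrib]
  congr 1
  case e_a =>
    have step : ∀ j : Fin K, ∀ p ∈ Finset.range (T + 1),
        ∑ n ∈ Finset.range (N * L),
          h j p * d j * cshift (N * L) p (c j) n * (starRingEnd ℂ) (c i n)
          = h j p * d j * ip (N * L) (cshift (N * L) p (c j)) (c i) := by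
      intro j p _
      rw [ip, Finset.mul_sum]
      apply Finset.sum_congr rfl
      intro n _
      ring
    simp only [Finset.sum_mul]
    rw [Finset.sum_comm]
    have : ∀ j : Fin K,
        ∑ n ∈ Finset.range (N * L), ∑ p ∈ Finset.range (T + 1),
          h j p * d j * cshift (N * L) p (c j) n * (starRingEnd ℂ) (c i n)
        = ∑ p ∈ Finset.range (T + 1), h j p * d j * ip (N * L) (cshift (N * L) p (c j)) (c i) := by
      intro j
      rw [Finset.sum_comm]
      exact Finset.sum_congr rfl (step j)
    rw [Finset.sum_congr rfl (fun j _ => this j)]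
    rw [Finset.sum_eq_single_of_mem i (Finset.mem_univ i)]
    · rw [Finset.mul_sum]
      apply Finset.sum_congr rfl
      intro p _
      ring
    · intro j _ hj
      apply Finset.sum_eq_zero
      intro p hp
      rw [hzero j hj p hp, mul_zero]
end
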